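/- arXiv:0904.1331 — 5 statements merged into one kernel-verified Lean document; each statement's English description precedes it below -/
import Mathlib

section
/- Let q be a prime power, n ≥ 1, and let A ∈ GL_n(𝔽_q) with minimal polynomial p ∈ 𝔽_q[X]. Then p(0) ≠ 0, the order of A in the group GL_n(𝔽_q) equals ord(p), and in particular the order of A is at most q^n − 1. -/
open Polynomial Matrix

/-- The order of a polynomial `f` over a finite field: the least positive
integer `e` such that `f` divides `X ^ e - 1`. -/
noncomputable def polyOrd {F : Type*} [Field F] (f : F[X]) : ℕ :=
  sInf {e : ℕ | 0 < e ∧ f ∣ X ^ e - 1}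

/-- For `A ∈ GL_n(𝔽_q)` with minimal polynomial `p`, one has `p(0) ≠ 0`,
`o(A) = ord p`, and in particular `o(A) ≤ q^n - 1`. -/
theorem stmt_5 {F : Type*} [Field F] [Fintype F] (n : ℕ) (hn : 1 ≤ n)
    (A : GL (Fin n) F) (p : F[X])
    (hp : p = minpoly F (A : Matrix (Fin n) (Fin n) F)) :
    p.eval 0 ≠ 0 ∧ orderOf A = polyOrd p ∧ orderOf A ≤ Fintype.card F ^ n - 1 := by
  haveI : Nonempty (Fin n) := ⟨⟨0, hn⟩⟩
  set M : Matrix (Fin n) (Fin n) F := (A : Matrix (Fin n) (Fin n) F) with hM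
  have hint : IsIntegral F M := .of_finite F M
  have hp0 : p ≠ 0 := hp ▸ minpoly.ne_zero hint
  have haev : (aeval M) p = 0 := hp ▸ minpoly.aeval F M
  have hdegpos : 0 < p.natDegree := hp ▸ minpoly.natDegree_pos hint
  -- A as a unit in the matrix ring
  have hAu : ∀ x : Matrix (Fin n) (Fin n) F, M * x = 0 → x = 0 := by
    intro x hx
    exact (Units.mul_right_eq_zero (u := (A : (Matrix (Fin n) (Fin n) F)ˣ))).mp hx
  -- p(0) ≠ 0
  have h0 : p.eval 0 ≠ 0 := by
    intro h
    have hXdvd : X ∣ p := X_dvd_iff.mpr (by rwa [coeff_zero_eq_eval_zero])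
    obtain ⟨r, hr⟩ := hXdvd
    have hr0 : r ≠ 0 := by rintro rfl; simp at hr; exact hp0 hr
    have hre : (aeval M) r = 0 := by
      apply hAu
      have : (aeval M) p = M * (aeval M) r := by rw [hr, _root_.map_mul, aeval_X]
      rw [← this, haev]
    have hdvd : p ∣ r := hp ▸ minpoly.dvd F M hre
    have h1 : p.natDegree ≤ r.natDegree := natDegree_le_of_dvd hdvd hr0
    have h2 : p.natDegree = 1 + r.natDegree := by
      rw [hr, natDegree_mul X_ne_zero hr0, natDegree_X]
    omega
  -- key equivalence
  have key : ∀ e : ℕ, (A ^ e = 1 ↔ p ∣ X ^ e - 1) := by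
    intro e
    constructor
    · intro h
      have hMe : M ^ e = 1 := by
        have := congrArg (Units.val) h
        simpa using this
      rw [hp]
      apply minpoly.dvd F M
      rw [map_sub, map_pow, aeval_X, _root_.map_one, hMe, sub_self]
    · rintro ⟨g, hg⟩
      have h1 : (aeval M) ((X : F[X]) ^ e - 1) = 0 := by
        have hg' : (X : F[X]) ^ e - 1 = p * g := hg
        rw [hg', _root_.map_mul, haev, zero_mul]
      have hMe : M ^ e = 1 := by
        rw [map_sub, map_pow, aeval_X, _root_.map_one, sub_eq_zero] at h1
        exact h1
      ext i j
      simpa using congrFun (congrFun hMe i) j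
  haveI : Finite (GL (Fin n) F) := inferInstanceAs (Finite (Matrix (Fin n) (Fin n) F)ˣ)
  have hApos : 0 < orderOf A := orderOf_pos A
  have hAmem : orderOf A ∈ {e : ℕ | 0 < e ∧ p ∣ X ^ e - 1} :=
    ⟨hApos, (key _).mp (pow_orderOf_eq_one A)⟩
  -- orderOf A = polyOrd p
  have h2 : orderOf A = polyOrd p := by
    apply le_antisymm
    · obtain ⟨hpos, hdvd⟩ := Nat.sInf_mem (⟨orderOf A, hAmem⟩ :
        Set.Nonempty {e : ℕ | 0 < e ∧ p ∣ X ^ e - 1})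
      exact Nat.le_of_dvd hpos (orderOf_dvd_of_pow_eq_one ((key _).mpr hdvd))
    · exact Nat.sInf_le hAmem
  refine ⟨h0, h2, ?_⟩
  -- bound via AdjoinRoot
  set Q := AdjoinRoot p with hQ
  set x : Q := AdjoinRoot.root p with hxdef
  have hxpow : ∀ e : ℕ, (x ^ e = 1 ↔ p ∣ X ^ e - 1) := by
    intro e
    rw [← sub_eq_zero]
    have : x ^ e - 1 = AdjoinRoot.mk p (X ^ e - 1) := by
      rw [map_sub, map_pow, _root_.map_one, AdjoinRoot.mk_X]
    rw [this, AdjoinRoot.mk_eq_zero]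
  have hxA : x ^ orderOf A = 1 := (hxpow _).mpr hAmem.2
  have hxu : IsUnit x := IsUnit.of_pow_eq_one hxA hApos.ne'
  obtain ⟨u, hu⟩ := hxu
  have hox : orderOf x = orderOf A := by
    apply Nat.dvd_antisymm
    · exact orderOf_dvd_of_pow_eq_one hxA
    · apply orderOf_dvd_of_pow_eq_one
      exact (key _).mpr ((hxpow _).mp (pow_orderOf_eq_one x))
  -- finiteness of Q
  haveI : Fintype Q := Module.fintypeOfFintype (AdjoinRoot.powerBasis hp0).basis
  have hcardQ : Fintype.card Q = Fintype.card F ^ p.natDegree := by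
    rw [Module.card_fintype (AdjoinRoot.powerBasis hp0).basis, Fintype.card_fin,
      AdjoinRoot.powerBasis_dim]
  haveI : Nontrivial Q := by
    apply AdjoinRoot.nontrivial
    rw [degree_eq_natDegree hp0]
    exact_mod_cast hdegpos.ne'
  haveI : DecidableEq Q := Classical.decEq _
  have h3 : orderOf A ≤ Fintype.card Q - 1 := by
    have : orderOf u = orderOf A := by rw [← hox, ← hu, orderOf_units]
    have hle : orderOf u ≤ Fintype.card Qˣ := orderOf_le_card_univ
    have hlt : Fintype.card Qˣ < Fintype.card Q := by
      have h := card_units_lt Q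
      convert h using 2
    omega
  -- degree bound
  have hdn : p.natDegree ≤ n := by
    have hdvd : p ∣ M.charpoly := hp ▸ minpoly.dvd F M (Matrix.aeval_self_charpoly M)
    have := natDegree_le_of_dvd hdvd M.charpoly_monic.ne_zero
    rwa [charpoly_natDegree_eq_dim, Fintype.card_fin] at this
  have hq2 : 2 ≤ Fintype.card F := Fintype.one_lt_card
  have : Fintype.card F ^ p.natDegree ≤ Fintype.card F ^ n :=
    Nat.pow_le_pow_right (by omega) hdn
  omega
end

section
/- Let q be a prime power, n ≥ 1, and let A ∈ GL_n(𝔽_q) with minimal polynomial p ∈ 𝔽_q[X] and characteristic polynomial χ ∈ 𝔽_q[X]. If the order of A in GL_n(𝔽_q) equals q^n − 1, then p = χ. Moreover, the following are equivalent: (a) the order of A equals q^n − 1; (b) p is a primitive polynomial of degree n; (c) χ is a primitive polynomial. -/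
open Polynomial Matrix

/-- A monic polynomial `f` of degree `n` over `𝔽_q` is primitive if `f(0) ≠ 0`
and `ord f = q ^ n - 1`. -/
def IsPrimitivePoly {F : Type*} [Field F] [Fintype F] (f : F[X]) : Prop :=
  f.Monic ∧ f.eval 0 ≠ 0 ∧ polyOrd f = Fintype.card F ^ f.natDegree - 1

/-!
The order of `A` is the order of its minimal polynomial `p`, and the order of any polynomial `f`
is the multiplicative order of the class of `X` in `𝔽_q[X]/(f)`, a ring with `q ^ deg f`
elements; hence `ord f ≤ q ^ deg f - 1`. So `o(A) = q ^ n - 1` forces `deg p = n`, i.e. `p = χ`.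
Conversely, if `χ` is primitive, the powers of `X` exhaust the `q ^ n - 1` nonzero elements of
`𝔽_q[X]/(χ)`, which is therefore a field: `χ` is irreducible, and again `p = χ`.
-/

theorem orderOf_eq_sInf {M : Type*} [Monoid M] (a : M) :
    orderOf a = sInf {e : ℕ | 0 < e ∧ a ^ e = 1} := by
  simp_rw [orderOf, Function.minimalPeriod_eq_sInf_n_pos_IsPeriodicPt,
    isPeriodicPt_mul_iff_pow_eq_one]

section FiniteRing

variable {R : Type*} [Finite R]

theorem isUnit_of_ne_zero_of_card_sub_one_le_card_units [MonoidWithZero R] [Nontrivial R]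
    (h : Nat.card R - 1 ≤ Nat.card Rˣ) {x : R} (hx : x ≠ 0) : IsUnit x := by
  have hsub : Set.range ((↑) : Rˣ → R) ⊆ {0}ᶜ := by
    rintro _ ⟨u, rfl⟩
    exact u.ne_zero
  have hcard : ({0}ᶜ : Set R).ncard ≤ (Set.range ((↑) : Rˣ → R)).ncard := by
    rwa [Set.ncard_compl, Set.ncard_singleton,
      Set.ncard_range_of_injective Units.val_injective]
  obtain ⟨u, rfl⟩ : x ∈ Set.range ((↑) : Rˣ → R) := by
    rw [Set.eq_of_subset_of_ncard_le hsub hcard]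
    exact hx
  exact u.isUnit

theorem isField_of_orderOf_eq_card_sub_one [CommRing R] [Nontrivial R] {a : R}
    (ha : orderOf a = Nat.card R - 1) : IsField R := by
  have hpos : 0 < orderOf a := by
    have := Finite.one_lt_card (α := R)
    omega
  obtain ⟨u, rfl⟩ : IsUnit a := IsUnit.of_pow_eq_one (pow_orderOf_eq_one a) hpos.ne'
  have hle : Nat.card R - 1 ≤ Nat.card Rˣ := by
    rw [← ha, orderOf_units]
    exact orderOf_le_card
  exact ⟨exists_pair_ne R, mul_comm, fun hx =>
    (isUnit_of_ne_zero_of_card_sub_one_le_card_units hle hx).exists_right_inv⟩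

end FiniteRing

section PolyOrd

variable {F : Type*} [Field F]

theorem polyOrd_eq_orderOf {M : Type*} [Monoid M] (f : F[X]) (a : M)
    (h : ∀ e, f ∣ X ^ e - 1 ↔ a ^ e = 1) : polyOrd f = orderOf a := by
  simp_rw [polyOrd, orderOf_eq_sInf, h]

theorem polyOrd_one : polyOrd (1 : F[X]) = 1 := by
  rw [polyOrd_eq_orderOf 1 (1 : F) fun e => by simp, orderOf_one]

theorem polyOrd_minpoly {A : Type*} [Ring A] [Algebra F A] (a : A) :
    polyOrd (minpoly F a) = orderOf a :=
  polyOrd_eq_orderOf _ _ fun e => by simp [minpoly.dvd_iff, sub_eq_zero]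

theorem polyOrd_eq_orderOf_root (f : F[X]) : polyOrd f = orderOf (AdjoinRoot.root f) :=
  polyOrd_eq_orderOf _ _ fun e => by
    rw [← AdjoinRoot.mk_eq_zero]
    simp [sub_eq_zero]

theorem eval_zero_ne_zero_of_polyOrd_ne_zero {f : F[X]} (h : polyOrd f ≠ 0) : f.eval 0 ≠ 0 := by
  obtain ⟨he, hdvd⟩ := Nat.sInf_mem (Nat.nonempty_of_pos_sInf (Nat.pos_of_ne_zero h))
  intro h0
  simpa [h0, zero_pow he.ne'] using eval_dvd (x := 0) hdvd

theorem AdjoinRoot.finite_of_ne_zero [Finite F] {f : F[X]} (hf : f ≠ 0) : Finite (AdjoinRoot f) :=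
  have := (AdjoinRoot.powerBasis hf).finite
  Module.finite_iff_finite.mp this

theorem AdjoinRoot.natCard_eq_pow [Finite F] {f : F[X]} (hf : f ≠ 0) :
    Nat.card (AdjoinRoot f) = Nat.card F ^ f.natDegree := by
  have := (AdjoinRoot.powerBasis hf).finite
  rw [Module.natCard_eq_pow_finrank (K := F), (AdjoinRoot.powerBasis hf).finrank,
    AdjoinRoot.powerBasis_dim]

variable [Fintype F]

theorem polyOrd_le_card_pow_natDegree_sub_one {f : F[X]} (hf : 0 < f.natDegree) :
    polyOrd f ≤ Fintype.card F ^ f.natDegree - 1 := by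
  have hf0 : f ≠ 0 := ne_zero_of_natDegree_gt hf
  have := AdjoinRoot.nontrivial f (natDegree_pos_iff_degree_pos.mp hf).ne'
  have := AdjoinRoot.finite_of_ne_zero hf0
  rw [polyOrd_eq_orderOf_root, ← Nat.card_eq_fintype_card, ← AdjoinRoot.natCard_eq_pow hf0]
  exact Nat.le_sub_one_of_lt (orderOf_lt_card _)

theorem IsPrimitivePoly.natDegree_pos {f : F[X]} (h : IsPrimitivePoly f) : 0 < f.natDegree := by
  obtain ⟨hm, -, hord⟩ := h
  by_contra! h0
  rw [Nat.le_zero.mp h0, hm.natDegree_eq_zero.mp (Nat.le_zero.mp h0), polyOrd_one] at hord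
  simp at hord

theorem IsPrimitivePoly.irreducible {f : F[X]} (h : IsPrimitivePoly f) : Irreducible f := by
  have hf0 : f ≠ 0 := h.1.ne_zero
  have := AdjoinRoot.nontrivial f (natDegree_pos_iff_degree_pos.mp h.natDegree_pos).ne'
  have := AdjoinRoot.finite_of_ne_zero hf0
  have hfield : IsField (AdjoinRoot f) := by
    refine isField_of_orderOf_eq_card_sub_one (a := AdjoinRoot.root f) ?_
    rw [← polyOrd_eq_orderOf_root, h.2.2, AdjoinRoot.natCard_eq_pow hf0, Nat.card_eq_fintype_card]
  have hmax := Ideal.Quotient.maximal_of_isField _ hfield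
  exact ((Ideal.span_singleton_prime hf0).mp hmax.isPrime).irreducible

end PolyOrd

section Matrix

variable {F ι : Type*} [Field F] [Fintype ι] [DecidableEq ι]

theorem Matrix.minpoly_eq_charpoly_of_irreducible [Nonempty ι] (M : Matrix ι ι F)
    (h : Irreducible M.charpoly) : minpoly F M = M.charpoly := by
  obtain hunit | hassoc := h.dvd_iff.mp M.minpoly_dvd_charpoly
  · exact absurd hunit (minpoly.not_isUnit F M)
  · exact eq_of_monic_of_associated (minpoly.monic M.isIntegral) M.charpoly_monic hassoc.symm

theorem Matrix.GeneralLinearGroup.minpoly_eq_charpoly_of_orderOf_eq [Fintype F] (A : GL ι F)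
    (h : orderOf A = Fintype.card F ^ Fintype.card ι - 1) :
    minpoly F (A : Matrix ι ι F) = (A : Matrix ι ι F).charpoly := by
  set M := (A : Matrix ι ι F)
  have hq : 1 < Fintype.card F := Fintype.one_lt_card
  have : Nonempty ι := by
    rw [← Fintype.card_pos_iff]
    by_contra! hι
    rw [Nat.le_zero.mp hι, pow_zero] at h
    exact (orderOf_pos A).ne' h
  have hbound := polyOrd_le_card_pow_natDegree_sub_one (minpoly.natDegree_pos M.isIntegral)
  rw [polyOrd_minpoly, orderOf_units, h] at hbound
  have hdeg : Fintype.card ι ≤ (minpoly F M).natDegree := by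
    rwa [← pow_le_pow_iff_right₀ hq, ← tsub_le_tsub_iff_right (Nat.one_le_pow _ _ (by omega))]
  refine (eq_of_monic_of_dvd_of_natDegree_le (minpoly.monic M.isIntegral) M.charpoly_monic
    M.minpoly_dvd_charpoly ?_).symm
  rwa [M.charpoly_natDegree_eq_dim]

end Matrix

theorem stmt_6_general {F : Type*} [Field F] [Fintype F] (n : ℕ)
    (A : GL (Fin n) F) (p χ : F[X])
    (hp : p = minpoly F (A : Matrix (Fin n) (Fin n) F))
    (hχ : χ = Matrix.charpoly (A : Matrix (Fin n) (Fin n) F)) :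
    (orderOf A = Fintype.card F ^ n - 1 → p = χ) ∧
    (orderOf A = Fintype.card F ^ n - 1 ↔ IsPrimitivePoly p ∧ p.natDegree = n) ∧
    (orderOf A = Fintype.card F ^ n - 1 ↔ IsPrimitivePoly χ) := by
  subst hp hχ
  set M := (A : Matrix (Fin n) (Fin n) F)
  have hord : orderOf A = polyOrd (minpoly F M) := by rw [polyOrd_minpoly, orderOf_units]
  have hp0 : (minpoly F M).eval 0 ≠ 0 :=
    eval_zero_ne_zero_of_polyOrd_ne_zero (hord ▸ (orderOf_pos A).ne')
  have hχdeg : M.charpoly.natDegree = n := by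
    rw [M.charpoly_natDegree_eq_dim, Fintype.card_fin]
  have hpχ : orderOf A = Fintype.card F ^ n - 1 → minpoly F M = M.charpoly := fun h =>
    A.minpoly_eq_charpoly_of_orderOf_eq (by rwa [Fintype.card_fin])
  have hprim : orderOf A = Fintype.card F ^ n - 1 →
      IsPrimitivePoly (minpoly F M) ∧ (minpoly F M).natDegree = n := fun h => by
    have hdeg : (minpoly F M).natDegree = n := by rw [hpχ h, hχdeg]
    exact ⟨⟨minpoly.monic M.isIntegral, hp0, by rw [← hord, h, hdeg]⟩, hdeg⟩
  refine ⟨hpχ, ⟨hprim, fun ⟨hp, hdeg⟩ => by rw [hord, hp.2.2, hdeg]⟩,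
    ⟨fun h => ?_, fun h => ?_⟩⟩
  · exact hpχ h ▸ (hprim h).1
  · have : NeZero n := ⟨by have := h.natDegree_pos; omega⟩
    rw [hord, M.minpoly_eq_charpoly_of_irreducible h.irreducible, h.2.2, hχdeg]

/-- For `A ∈ GL_n(𝔽_q)` with minimal polynomial `p` and characteristic polynomial `χ`:
if `o(A) = q^n - 1` then `p = χ`; moreover `o(A) = q^n - 1` iff `p` is primitive of
degree `n`, iff `χ` is primitive. -/
theorem stmt_6 {F : Type*} [Field F] [Fintype F] (n : ℕ) (hn : 1 ≤ n)
    (A : GL (Fin n) F) (p χ : F[X])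
    (hp : p = minpoly F (A : Matrix (Fin n) (Fin n) F))
    (hχ : χ = Matrix.charpoly (A : Matrix (Fin n) (Fin n) F)) :
    (orderOf A = Fintype.card F ^ n - 1 → p = χ) ∧
    (orderOf A = Fintype.card F ^ n - 1 ↔ IsPrimitivePoly p ∧ p.natDegree = n) ∧
    (orderOf A = Fintype.card F ^ n - 1 ↔ IsPrimitivePoly χ) :=
  stmt_6_general n A p χ hp hχ
end

section
/- Let q be a prime power and n ≥ 1, and let H be a Singer subgroup of GL_n(𝔽_q). Then the normalizer N of H in GL_n(𝔽_q) has cardinality |N| = n(q^n − 1). -/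
/-!
Let `g` generate `H` and let `F[g]` be the algebra of matrices it generates. By Cayley–Hamilton
`F[g]` has at most `q ^ n` elements, and it contains `0` and the `q ^ n - 1` distinct powers of
`g`; so `F[g] = {0} ∪ H` is a field of degree `n` over `F`, and `s ↦ s v` (for any `v ≠ 0`)
identifies it with `F ^ n`. Through this identification a matrix commuting with `g` is
multiplication by an element of `F[g]`, so the centralizer of `H` is `H` itself, and every
automorphism of `F[g]` over `F` is conjugation by an invertible matrix. Conjugation therefore maps
the normalizer of `H` onto `Gal(F[g]/F)` with kernel `H`, whence `|N| = |H| · [F[g] : F]`.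
-/

open Matrix

open scoped Algebra

theorem Algebra.finrank_adjoin_singleton_le_natDegree_minpoly {K A : Type*} [Field K] [Ring A]
    [Algebra K A] {x : A} (hx : IsIntegral K x) :
    Module.finrank K K[x] ≤ (minpoly K x).natDegree := by
  set powers := Set.range fun i : Fin (minpoly K x).natDegree => x ^ (i : ℕ)
  have hspan : Subalgebra.toSubmodule K[x] ≤ Submodule.span K powers := by
    intro y hy
    rw [Subalgebra.mem_toSubmodule, Algebra.adjoin_singleton_eq_range_aeval] at hy
    obtain ⟨f, rfl⟩ := hy
    exact hx.mem_span_pow ⟨f, rfl⟩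
  have := FiniteDimensional.span_of_finite K (Set.finite_range _ : powers.Finite)
  calc Module.finrank K K[x] = Module.finrank K (Subalgebra.toSubmodule K[x]) := rfl
    _ ≤ _ := Submodule.finrank_mono hspan
    _ ≤ _ := finrank_range_le_card _
    _ = _ := Fintype.card_fin _

theorem Matrix.natCard_adjoin_le {ι K : Type*} [Fintype ι] [DecidableEq ι] [Field K] [Finite K]
    (X : Matrix ι ι K) : Nat.card K[X] ≤ Nat.card K ^ Fintype.card ι := by
  have hdeg : (minpoly K X).natDegree ≤ Fintype.card ι := by
    rw [← X.charpoly_natDegree_eq_dim]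
    exact Polynomial.natDegree_le_of_dvd X.minpoly_dvd_charpoly X.charpoly_monic.ne_zero
  rw [Module.natCard_eq_pow_finrank (K := K)]
  exact Nat.pow_le_pow_right Nat.card_pos <|
    (Algebra.finrank_adjoin_singleton_le_natDegree_minpoly (IsIntegral.of_finite K X)).trans hdeg

namespace Units

variable {R A : Type*} [CommSemiring R] [Semiring A] [Algebra R A] (g : Aˣ)

theorem insert_zero_image_pow_subset_adjoin :
    insert 0 ((fun k : ℕ => ((g ^ k : Aˣ) : A)) '' Set.Iio (orderOf g)) ⊆ R[(g : A)] := by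
  rintro _ (rfl | ⟨k, -, rfl⟩)
  · exact zero_mem _
  · exact pow_mem (Algebra.self_mem_adjoin_singleton R _) k

theorem ncard_insert_zero_image_pow [Nontrivial A] :
    (insert 0 ((fun k : ℕ => ((g ^ k : Aˣ) : A)) '' Set.Iio (orderOf g))).ncard =
      orderOf g + 1 := by
  have hinj : Set.InjOn (fun k : ℕ => ((g ^ k : Aˣ) : A)) (Set.Iio (orderOf g)) :=
    Units.val_injective.comp_injOn pow_injOn_Iio_orderOf
  rw [Set.ncard_insert_of_notMem, hinj.ncard_image,
    ← Finset.coe_range, Set.ncard_coe_finset, Finset.card_range]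
  · rintro ⟨k, -, hk⟩
    exact (g ^ k).ne_zero hk

end Units

namespace Subalgebra

variable {R A : Type*} [CommSemiring R] [Semiring A] [Algebra R A] (S : Subalgebra R A)

def unitsNormalizer : Subgroup Aˣ where
  carrier := {u | ∀ a : A, a ∈ S ↔ ↑u * a * ↑u⁻¹ ∈ S}
  one_mem' := by simp
  mul_mem' {u w} hu hw a := by
    rw [hw, hu]
    simp [mul_assoc]
  inv_mem' {u} hu a := by
    rw [hu (↑u⁻¹ * a * ↑u⁻¹⁻¹)]
    simp [mul_assoc]

theorem mem_unitsNormalizer {u : Aˣ} :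
    u ∈ S.unitsNormalizer ↔ ∀ a : A, a ∈ S ↔ ↑u * a * ↑u⁻¹ ∈ S :=
  Iff.rfl

def conjAut : S.unitsNormalizer →* (S ≃ₐ[R] S) where
  toFun u :=
    { toFun := fun s => ⟨(u : Aˣ) * s * ↑(u⁻¹ : Aˣ), (u.2 s).1 s.2⟩
      invFun := fun s => ⟨↑(u⁻¹ : Aˣ) * s * (u : Aˣ), by
        simpa using ((u⁻¹).2 s).1 s.2⟩
      left_inv := fun s => by ext; simp [mul_assoc]
      right_inv := fun s => by ext; simp [mul_assoc]
      map_mul' := fun s t => by ext; simp [mul_assoc]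
      map_add' := fun s t => by ext; simp [mul_add, add_mul]
      commutes' := fun r => by ext; simp [Algebra.commutes, mul_assoc] }
  map_one' := by ext; simp
  map_mul' u w := by ext; simp [mul_assoc]

@[simp]
theorem coe_conjAut_apply (u : S.unitsNormalizer) (s : S) :
    (S.conjAut u s : A) = (u : Aˣ) * s * ↑(u⁻¹ : Aˣ) :=
  rfl

theorem mem_ker_conjAut {u : S.unitsNormalizer} :
    u ∈ S.conjAut.ker ↔ ∀ s ∈ S, Commute ((u : Aˣ) : A) s := by
  simp only [MonoidHom.mem_ker, AlgEquiv.ext_iff, Subtype.ext_iff, coe_conjAut_apply,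
    AlgEquiv.one_apply, Subtype.forall]
  exact forall₂_congr fun s _ => Units.mul_inv_eq_iff_eq_mul _

theorem conjAut_surjective
    (h : ∀ σ : S ≃ₐ[R] S, ∃ u : Aˣ, ∀ s : S, ↑u * s * ↑u⁻¹ = (σ s : A)) :
    Function.Surjective S.conjAut := by
  intro σ
  obtain ⟨u, hu⟩ := h σ
  have hmem : u ∈ S.unitsNormalizer := fun a => by
    refine ⟨fun ha => hu ⟨a, ha⟩ ▸ (σ ⟨a, ha⟩).2, fun ha => ?_⟩
    obtain ⟨b, hb⟩ := σ.surjective ⟨_, ha⟩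
    have hconj : (u : A) * b * ↑u⁻¹ = ↑u * a * ↑u⁻¹ :=
      (hu b).trans (congrArg Subtype.val hb)
    have hba : (b : A) = a := by simpa using hconj
    exact hba ▸ b.2
  exact ⟨⟨u, hmem⟩, AlgEquiv.ext fun s => Subtype.ext (hu s)⟩

end Subalgebra

theorem Subgroup.normalizer_eq_unitsNormalizer {R A : Type*} [CommSemiring R] [Semiring A]
    [Nontrivial A] [Algebra R A] {H : Subgroup Aˣ} {S : Subalgebra R A}
    (hS : ∀ a : A, a ∈ S ↔ a = 0 ∨ ∃ w ∈ H, (w : A) = a) :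
    Subgroup.normalizer (H : Set Aˣ) = S.unitsNormalizer := by
  have hunit (w : Aˣ) : w ∈ H ↔ (w : A) ∈ S := by
    simp [hS, Units.val_inj]
  ext u
  rw [Subgroup.mem_normalizer_iff, S.mem_unitsNormalizer]
  refine ⟨fun hN a => ?_, fun hU w => ?_⟩
  · have hconj : (∃ w ∈ H, (w : A) = a) ↔ ∃ w ∈ H, (w : A) = ↑u * a * ↑u⁻¹ := by
      refine ⟨fun ⟨w, hw, hwa⟩ => ⟨u * w * u⁻¹, (hN w).1 hw, by simp [hwa]⟩,
        fun ⟨w, hw, hwa⟩ =>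
          ⟨u⁻¹ * w * u, (hN _).2 (by simpa [mul_assoc] using hw), ?_⟩⟩
      simp [hwa, mul_assoc]
    simp only [hS, hconj, Units.mul_right_eq_zero, Units.mul_left_eq_zero]
  · rw [hunit, hunit, hU, Units.val_mul, Units.val_mul]

namespace Matrix.GeneralLinearGroup

open Subgroup

variable {F : Type*} [Field F] [Fintype F] {n : ℕ} [NeZero n] {g : GL (Fin n) F}

local notation "𝕄" => Matrix (Fin n) (Fin n) F

theorem coe_adjoin_eq_of_orderOf_eq (hg : orderOf g = Fintype.card F ^ n - 1) :
    (F[(g : 𝕄)] : Set 𝕄) =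
      insert 0 ((fun k : ℕ => ((g ^ k : GL (Fin n) F) : 𝕄)) '' Set.Iio (orderOf g)) := by
  refine (Set.eq_of_subset_of_ncard_le g.insert_zero_image_pow_subset_adjoin ?_
    (Set.toFinite _)).symm
  rw [g.ncard_insert_zero_image_pow, hg, Nat.sub_add_cancel (Nat.one_le_pow _ _ Fintype.card_pos),
    ← Nat.card_coe_set_eq, ← Nat.card_eq_fintype_card]
  simpa using natCard_adjoin_le (g : 𝕄)

theorem card_adjoin_of_orderOf_eq (hg : orderOf g = Fintype.card F ^ n - 1) :
    Nat.card F[(g : 𝕄)] = Fintype.card F ^ n := by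
  rw [← SetLike.coe_sort_coe, Nat.card_coe_set_eq, coe_adjoin_eq_of_orderOf_eq hg,
    g.ncard_insert_zero_image_pow, hg, Nat.sub_add_cancel (Nat.one_le_pow _ _ Fintype.card_pos)]

theorem mem_adjoin_iff_of_orderOf_eq (hg : orderOf g = Fintype.card F ^ n - 1) {a : 𝕄} :
    a ∈ F[(g : 𝕄)] ↔ a = 0 ∨ ∃ w ∈ zpowers g, (w : 𝕄) = a := by
  classical
  rw [← SetLike.mem_coe, coe_adjoin_eq_of_orderOf_eq hg]
  simp [mem_zpowers_iff_mem_range_orderOf]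

theorem finrank_adjoin_of_orderOf_eq (hg : orderOf g = Fintype.card F ^ n - 1) :
    Module.finrank F F[(g : 𝕄)] = n := by
  have h := card_adjoin_of_orderOf_eq hg
  rw [Module.natCard_eq_pow_finrank (K := F), Nat.card_eq_fintype_card] at h
  exact Nat.pow_right_injective Fintype.one_lt_card h

theorem isUnit_or_eq_zero_of_orderOf_eq (hg : orderOf g = Fintype.card F ^ n - 1)
    (s : F[(g : 𝕄)]) : IsUnit s ∨ s = 0 := by
  rcases (mem_adjoin_iff_of_orderOf_eq hg).1 s.2 with h | ⟨w, -, hw⟩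
  · exact Or.inr (Subtype.ext h)
  · refine Or.inl (IsLeftRegular.isUnit_of_finite fun a b hab => Subtype.ext ?_)
    exact w.isUnit.isRegular.left (by simpa [hw] using congrArg Subtype.val hab)

open scoped IsMulCommutative in
theorem card_algEquiv_adjoin_of_orderOf_eq (hg : orderOf g = Fintype.card F ^ n - 1) :
    Nat.card (F[(g : 𝕄)] ≃ₐ[F] F[(g : 𝕄)]) = n := by
  let _ : Field F[(g : 𝕄)] := Field.ofIsUnitOrEqZero (isUnit_or_eq_zero_of_orderOf_eq hg)
  rw [IsGalois.card_aut_eq_finrank, finrank_adjoin_of_orderOf_eq hg]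

noncomputable def mulVecEquiv (hg : orderOf g = Fintype.card F ^ n - 1) {v : Fin n → F}
    (hv : v ≠ 0) : F[(g : 𝕄)] ≃ₗ[F] (Fin n → F) :=
  LinearMap.linearEquivOfInjective ((mulVecBilin F F).flip v ∘ₗ (Subalgebra.val _).toLinearMap)
    (by
      refine (injective_iff_map_eq_zero _).2 fun s hs => ?_
      rcases (mem_adjoin_iff_of_orderOf_eq hg).1 s.2 with h | ⟨w, -, hw⟩
      · exact Subtype.ext h
      · refine absurd (mulVec_injective_of_isUnit w.isUnit ?_) hv
        simpa [hw] using hs)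
    (by rw [finrank_adjoin_of_orderOf_eq hg, Module.finrank_fin_fun])

theorem mulVecEquiv_apply (hg : orderOf g = Fintype.card F ^ n - 1) {v : Fin n → F} (hv : v ≠ 0)
    (s : F[(g : 𝕄)]) : mulVecEquiv hg hv s = (s : 𝕄) *ᵥ v :=
  rfl

theorem mulVecEquiv_mul (hg : orderOf g = Fintype.card F ^ n - 1) {v : Fin n → F} (hv : v ≠ 0)
    (s t : F[(g : 𝕄)]) :
    mulVecEquiv hg hv (s * t) = (s : 𝕄) *ᵥ mulVecEquiv hg hv t := by
  simp [mulVecEquiv_apply, mulVec_mulVec]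

theorem eq_of_forall_mulVec_mulVecEquiv (hg : orderOf g = Fintype.card F ^ n - 1) {v : Fin n → F}
    (hv : v ≠ 0) {X Y : 𝕄} (h : ∀ t, X *ᵥ mulVecEquiv hg hv t = Y *ᵥ mulVecEquiv hg hv t) :
    X = Y :=
  mulVec_injective <| funext fun w => by
    obtain ⟨t, rfl⟩ := (mulVecEquiv hg hv).surjective w
    exact h t

open scoped IsMulCommutative in
theorem mem_adjoin_of_commute (hg : orderOf g = Fintype.card F ^ n - 1) {x : 𝕄}
    (hx : Commute x g) : x ∈ F[(g : 𝕄)] := by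
  obtain ⟨v, hv⟩ := exists_ne (0 : Fin n → F)
  set e := mulVecEquiv hg hv
  set s₀ := e.symm (x *ᵥ v)
  suffices x = s₀ from this ▸ s₀.2
  refine eq_of_forall_mulVec_mulVecEquiv hg hv fun t => ?_
  have hxt : Commute x t := Algebra.commute_of_mem_adjoin_singleton_of_commute t.2 hx
  calc x *ᵥ e t = (t : 𝕄) *ᵥ e s₀ := by
        rw [LinearEquiv.apply_symm_apply, mulVecEquiv_apply, mulVec_mulVec, hxt.eq,
          ← mulVec_mulVec]
    _ = s₀ *ᵥ e t := by rw [← mulVecEquiv_mul, mul_comm, mulVecEquiv_mul]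

theorem exists_conj_eq (hg : orderOf g = Fintype.card F ^ n - 1)
    (σ : F[(g : 𝕄)] ≃ₐ[F] F[(g : 𝕄)]) :
    ∃ u : GL (Fin n) F, ∀ s, (u : 𝕄) * s * (u⁻¹ : GL (Fin n) F) = σ s := by
  obtain ⟨v, hv⟩ := exists_ne (0 : Fin n → F)
  set e := mulVecEquiv hg hv
  set τ := e.symm ≪≫ₗ σ.toLinearEquiv ≪≫ₗ e
  let u : GL (Fin n) F :=
    ⟨LinearMap.toMatrix' τ, LinearMap.toMatrix' τ.symm, by simp [← LinearMap.toMatrix'_comp],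
      by simp [← LinearMap.toMatrix'_comp]⟩
  have hu (t) : (u : 𝕄) *ᵥ e t = e (σ t) := by
    simp [u, τ, LinearMap.toMatrix'_mulVec]
  refine ⟨u, fun s => ?_⟩
  rw [Units.mul_inv_eq_iff_eq_mul]
  refine eq_of_forall_mulVec_mulVecEquiv hg hv fun t => ?_
  rw [← mulVec_mulVec, ← mulVec_mulVec, ← mulVecEquiv_mul, hu, hu, map_mul, mulVecEquiv_mul]

theorem normalizer_zpowers_eq_unitsNormalizer (hg : orderOf g = Fintype.card F ^ n - 1) :
    normalizer (zpowers g : Set (GL (Fin n) F)) = F[(g : 𝕄)].unitsNormalizer :=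
  normalizer_eq_unitsNormalizer fun _ => mem_adjoin_iff_of_orderOf_eq hg

theorem ker_conjAut_adjoin (hg : orderOf g = Fintype.card F ^ n - 1) :
    F[(g : 𝕄)].conjAut.ker = (zpowers g).subgroupOf F[(g : 𝕄)].unitsNormalizer := by
  ext ⟨u, -⟩
  rw [Subalgebra.mem_ker_conjAut, mem_subgroupOf]
  constructor
  · intro h
    have hu := mem_adjoin_of_commute hg (h _ (Algebra.self_mem_adjoin_singleton F _))
    obtain h0 | ⟨w, hw, hwu⟩ := (mem_adjoin_iff_of_orderOf_eq hg).1 hu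
    · exact absurd h0 u.ne_zero
    · exact Units.ext hwu ▸ hw
  · intro h s hs
    have hu := (mem_adjoin_iff_of_orderOf_eq hg).2 (Or.inr ⟨u, h, rfl⟩)
    exact Algebra.commute_of_mem_adjoin_singleton_of_commute hs
      (Algebra.commute_of_mem_adjoin_self hu).symm

theorem card_normalizer_zpowers_of_orderOf_eq (hg : orderOf g = Fintype.card F ^ n - 1) :
    Nat.card (normalizer (zpowers g : Set (GL (Fin n) F))) = n * (Fintype.card F ^ n - 1) := by
  set S := F[(g : 𝕄)]
  have hle : zpowers g ≤ S.unitsNormalizer :=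
    normalizer_zpowers_eq_unitsNormalizer hg ▸ le_normalizer
  rw [normalizer_zpowers_eq_unitsNormalizer hg, ← S.conjAut.ker.card_mul_index,
    Subgroup.index_ker, MonoidHom.range_eq_top.2 (S.conjAut_surjective (exists_conj_eq hg)),
    card_top, card_algEquiv_adjoin_of_orderOf_eq hg, ker_conjAut_adjoin hg,
    Nat.card_congr (subgroupOfEquivOfLe hle).toEquiv, Nat.card_zpowers, hg, mul_comm]

end Matrix.GeneralLinearGroup

/-- The normalizer of a Singer subgroup of `GL_n(𝔽_q)` has cardinality `n (q^n - 1)`. -/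
theorem stmt_9 {F : Type*} [Field F] [Fintype F] (n : ℕ) (hn : 1 ≤ n)
    (H : Subgroup (GL (Fin n) F))
    (hHc : IsCyclic H) (hHcard : Nat.card H = Fintype.card F ^ n - 1) :
    Nat.card (Subgroup.normalizer (H : Set (GL (Fin n) F))) = n * (Fintype.card F ^ n - 1) := by
  have : NeZero n := NeZero.of_pos hn
  obtain ⟨g, rfl⟩ := (H.isCyclic_iff_exists_zpowers_eq_top).1 hHc
  rw [Nat.card_zpowers] at hHcard
  exact Matrix.GeneralLinearGroup.card_normalizer_zpowers_of_orderOf_eq hHcard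
end

section
/- Let q be a prime power, m, n ≥ 1, and let C_0, C_1, …, C_{n−1} ∈ M_m(𝔽_q). (i) If C_0 is nonsingular, then for every initial state the sequence generated by the σ-LFSR with coefficients C_0, …, C_{n−1} is periodic (its preperiod is 0). (ii) Conversely, if for every nonzero row vector b ∈ 𝔽_q^m the sequence generated from the initial state (b, 0, …, 0) is periodic, then C_0 is nonsingular. -/
/-! If `C 0` is invertible, the map sending a window of `n` consecutive terms of the sequence
to the next window is injective on a finite set, hence a permutation, so every orbit is
periodic. If `b ≠ 0` lies in the left kernel of `C 0`, the impulse `b, 0, 0, …` satisfies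
the recurrence and vanishes from time `1` on, so it never returns to `b`. -/

open Matrix Function

theorem Function.Injective.exists_period_of_orbit {α : Type*} [Finite α] {T : α → α}
    (hT : Injective T) {w : ℕ → α} (hw : ∀ i, w (i + 1) = T (w i)) :
    ∃ r, 0 < r ∧ ∀ j, w (j + r) = w j := by
  have := Fintype.ofFinite α
  have horbit : ∀ j k, w (j + k) = T^[k] (w j) := by
    intro j k
    induction k with
    | zero => rfl
    | succ k ih => rw [← add_assoc, hw, ih, iterate_succ_apply']
  refine ⟨(Fintype.card α).factorial, Nat.factorial_pos _, fun j => ?_⟩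
  rw [horbit, injective_iff_iterate_factorial_card_eq_id.mp hT, id]

namespace SigmaLFSR

variable {ι R : Type*} [Fintype ι] [Ring R] {n : ℕ}

def window (n : ℕ) (s : ℕ → ι → R) (i : ℕ) : Fin (n + 1) → ι → R :=
  fun k => s (i + k)

def step (C : Fin (n + 1) → Matrix ι ι R) (w : Fin (n + 1) → ι → R) : Fin (n + 1) → ι → R :=
  Fin.snoc (Fin.tail w) (∑ j, w j ᵥ* C j)

theorem window_succ {C : Fin (n + 1) → Matrix ι ι R} {s : ℕ → ι → R}
    (hs : ∀ i, s (i + (n + 1)) = ∑ j : Fin (n + 1), s (i + j) ᵥ* C j) (i : ℕ) :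
    window n s (i + 1) = step C (window n s i) := by
  funext k
  refine Fin.lastCases ?_ (fun k => ?_) k
  · simp only [window, step, Fin.snoc_last, Fin.val_last, ← hs]
    ring_nf
  · simp only [window, step, Fin.snoc_castSucc, Fin.tail, Fin.val_castSucc, Fin.val_succ]
    ring_nf

theorem step_injective [DecidableEq ι] {C : Fin (n + 1) → Matrix ι ι R} (hC : IsUnit (C 0)) :
    Injective (step C) := by
  intro w w' h
  have htail : Fin.tail w = Fin.tail w' := by
    simpa only [step, Fin.init_snoc] using congrArg Fin.init h
  have hsum : ∑ j, w j ᵥ* C j = ∑ j, w' j ᵥ* C j := by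
    simpa only [step, Fin.snoc_last] using congrFun h (Fin.last n)
  have hhead : w 0 = w' 0 := by
    rw [Fin.sum_univ_succ, Fin.sum_univ_succ] at hsum
    simp only [show ∀ j : Fin n, w j.succ = w' j.succ from congrFun htail] at hsum
    exact vecMul_injective_of_isUnit hC (add_right_cancel hsum)
  rw [← Fin.cons_self_tail w, ← Fin.cons_self_tail w', hhead, htail]

theorem impulse_recurrence {C : Fin (n + 1) → Matrix ι ι R} {b : ι → R} (hb : b ᵥ* C 0 = 0)
    (i : ℕ) : (Pi.single 0 b : ℕ → ι → R) (i + (n + 1)) =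
      ∑ j : Fin (n + 1), (Pi.single 0 b : ℕ → ι → R) (i + j) ᵥ* C j := by
  rw [Pi.single_eq_of_ne (by omega), eq_comm]
  refine Finset.sum_eq_zero fun j _ => ?_
  by_cases hij : i + j = 0
  · obtain rfl : j = 0 := Fin.ext (by rw [Fin.val_zero]; omega)
    rw [hij, Pi.single_eq_same, hb]
  · rw [Pi.single_eq_of_ne hij, zero_vecMul]

end SigmaLFSR

open SigmaLFSR

theorem stmt_12_general {F : Type*} [Field F] [Fintype F] (m n : ℕ) (hn : 1 ≤ n)
    (C : Fin n → Matrix (Fin m) (Fin m) F) :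
    (IsUnit (C ⟨0, hn⟩) →
      ∀ s : ℕ → Fin m → F, (∀ i : ℕ, s (i + n) = ∑ j : Fin n, s (i + (j : ℕ)) ᵥ* C j) →
        ∃ r : ℕ, 1 ≤ r ∧ ∀ j : ℕ, s (j + r) = s j) ∧
    ((∀ b : Fin m → F, b ≠ 0 →
      ∀ s : ℕ → Fin m → F, (∀ i : ℕ, s (i + n) = ∑ j : Fin n, s (i + (j : ℕ)) ᵥ* C j) →
        s 0 = b → (∀ j : ℕ, 1 ≤ j → j < n → s j = 0) →
        ∃ r : ℕ, 1 ≤ r ∧ ∀ j : ℕ, s (j + r) = s j) →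
      IsUnit (C ⟨0, hn⟩)) := by
  obtain ⟨n, rfl⟩ : ∃ n', n = n' + 1 := ⟨n - 1, by omega⟩
  refine ⟨fun hC s hs => ?_, fun H => ?_⟩
  · obtain ⟨r, hr, hper⟩ := (step_injective hC).exists_period_of_orbit (window_succ hs)
    exact ⟨r, hr, fun j => by simpa [window] using congrFun (hper j) 0⟩
  · by_contra hC
    obtain ⟨b, hb, hbC⟩ : ∃ b ≠ 0, b ᵥ* C 0 = 0 := by
      rwa [exists_vecMul_eq_zero_iff, ← isUnit_iff_ne_zero.not_left, ← isUnit_iff_isUnit_det]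
    obtain ⟨r, hr, hper⟩ := H b hb _ (impulse_recurrence hbC) (Pi.single_eq_same _ _)
      (fun j hj _ => Pi.single_eq_of_ne (by omega) _)
    exact hb (by simpa [Pi.single_eq_of_ne (show r ≠ 0 by omega)] using (hper 0).symm)

/-- (i) If `C 0` is nonsingular then every sequence generated by the σ-LFSR with matrix
coefficients `C 0, …, C (n-1)` is periodic (preperiod `0`).  (ii) Conversely, if for
every nonzero row vector `b` the sequence generated from the initial state
`(b, 0, …, 0)` is periodic, then `C 0` is nonsingular. -/
theorem stmt_12 {F : Type*} [Field F] [Fintype F] (m n : ℕ) (hm : 1 ≤ m) (hn : 1 ≤ n)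
    (C : Fin n → Matrix (Fin m) (Fin m) F) :
    (IsUnit (C ⟨0, hn⟩) →
      ∀ s : ℕ → Fin m → F, (∀ i : ℕ, s (i + n) = ∑ j : Fin n, s (i + (j : ℕ)) ᵥ* C j) →
        ∃ r : ℕ, 1 ≤ r ∧ ∀ j : ℕ, s (j + r) = s j) ∧
    ((∀ b : Fin m → F, b ≠ 0 →
      ∀ s : ℕ → Fin m → F, (∀ i : ℕ, s (i + n) = ∑ j : Fin n, s (i + (j : ℕ)) ᵥ* C j) →
        s 0 = b → (∀ j : ℕ, 1 ≤ j → j < n → s j = 0) →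
        ∃ r : ℕ, 1 ≤ r ∧ ∀ j : ℕ, s (j + r) = s j) →
      IsUnit (C ⟨0, hn⟩)) :=
  stmt_12_general m n hn C
end

section
/- Let q be a prime power, m, n ≥ 1, and let T be the (m,n)-block companion matrix over 𝔽_q built from C_0, C_1, …, C_{n−1} ∈ M_m(𝔽_q). Then the characteristic polynomial of T equals det(F(X)), where F(X) = I_m X^n − C_{n−1} X^{n−1} − ⋯ − C_1 X − C_0 is an m × m matrix with entries in 𝔽_q[X]. -/
/-!
Left-multiplying the block matrix `X • 1 - T` by the unitriangular block matrix
`(X ^ (j - i) • 1)_{i ≤ j}` runs Horner's scheme on the block rows: what remains is `-1` on the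
block subdiagonal and the Horner tails `X ^ (n - i) • 1 - ∑_{j ≥ i} X ^ (j - i) • C_j` in the
last block column. After a cyclic rotation of the block rows this is block upper triangular
with diagonal blocks `-1, …, -1, F(X)`, and the sign of the rotation cancels the determinants
of the `-1` blocks.
-/

open Polynomial Matrix

/-- The `(m,n)`-block companion matrix built from `C_0, C_1, …, C_{n-1} ∈ M_m(𝔽_q)`:
the `n × n` block matrix whose `(i+1, i)` block is `I_m` for `1 ≤ i ≤ n-1`, whose last
block column is `(C_0, C_1, …, C_{n-1})ᵀ`, and whose remaining blocks are zero. -/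
def blockCompanion {F : Type*} [Field F] {m n : ℕ}
    (C : Fin n → Matrix (Fin m) (Fin m) F) :
    Matrix (Fin n × Fin m) (Fin n × Fin m) F :=
  Matrix.of fun p q =>
    if (q.1 : ℕ) = n - 1 then C p.1 p.2 q.2
    else if (p.1 : ℕ) = (q.1 : ℕ) + 1 then (if p.2 = q.2 then 1 else 0) else 0

namespace Matrix

theorem BlockTriangular.det_comp {R ι α : Type*} [CommRing R] [Fintype ι] [DecidableEq ι]
    [Fintype α] [LinearOrder α] {B : Matrix α α (Matrix ι ι R)} (hB : B.BlockTriangular id) :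
    (Matrix.comp α α ι ι R B).det = ∏ a, (B a a).det := by
  have hcomp : (Matrix.comp α α ι ι R B).BlockTriangular Prod.fst := fun p q h => by
    simp [hB h]
  rw [hcomp.det_fintype]
  refine Finset.prod_congr rfl fun a _ => ?_
  let e : ι ≃ {p : α × ι // p.1 = a} :=
    { toFun := fun i => ⟨(a, i), rfl⟩
      invFun := fun p => p.1.2
      left_inv := fun _ => rfl
      right_inv := by rintro ⟨⟨_, i⟩, rfl⟩; rfl }
  rw [← det_submatrix_equiv_self e]
  rfl

theorem charmatrix_comp {R ι α : Type*} [CommRing R] [Fintype ι] [DecidableEq ι] [Fintype α]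
    [DecidableEq α] (B : Matrix α α (Matrix ι ι R)) :
    charmatrix (comp α α ι ι R B) = comp α α ι ι R[X] ((X : R[X]) • 1 - B.map (·.map C)) := by
  ext ⟨i, a⟩ ⟨j, b⟩
  by_cases hij : i = j <;> by_cases hab : a = b <;> simp [hij, hab]

variable {S ι : Type*} [CommRing S] [DecidableEq ι] {n : ℕ}

def companionBlocks (P : Fin n → Matrix ι ι S) : Matrix (Fin n) (Fin n) (Matrix ι ι S) :=
  of fun i j => if (j : ℕ) = n - 1 then P i else if (i : ℕ) = j + 1 then 1 else 0

def powerUnitriangular (x : S) : Matrix (Fin n) (Fin n) (Matrix ι ι S) :=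
  of fun i j => if i ≤ j then x ^ ((j : ℕ) - i) • 1 else 0

def hornerTail (x : S) (P : Fin n → Matrix ι ι S) (i : ℕ) : Matrix ι ι S :=
  x ^ (n - i) • 1 - ∑ j : Fin n, if i ≤ j then x ^ ((j : ℕ) - i) • P j else 0

def reducedCompanionBlocks (x : S) (P : Fin n → Matrix ι ι S) :
    Matrix (Fin n) (Fin n) (Matrix ι ι S) :=
  of fun i k => if (k : ℕ) = n - 1 then hornerTail x P i else if (i : ℕ) = k + 1 then -1 else 0

theorem companionBlocks_map {S' : Type*} [CommRing S'] (f : S →+* S')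
    (P : Fin n → Matrix ι ι S) :
    (companionBlocks P).map (·.map f) = companionBlocks fun i => (P i).map f := by
  ext1 i j
  simp [companionBlocks, apply_ite (Matrix.map · f)]

variable [Fintype ι]

theorem det_comp_powerUnitriangular (x : S) :
    (comp (Fin n) (Fin n) ι ι S (powerUnitriangular x)).det = 1 := by
  have hV : (powerUnitriangular (ι := ι) (n := n) x).BlockTriangular id := fun _ _ h =>
    if_neg (not_le.mpr h)
  rw [hV.det_comp]
  simp [powerUnitriangular]

theorem mul_companionBlocks_apply (A : Matrix (Fin n) (Fin n) (Matrix ι ι S))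
    (P : Fin n → Matrix ι ι S) (i k : Fin n) :
    (A * companionBlocks P) i k =
      if hk : (k : ℕ) = n - 1 then ∑ j, A i j * P j else A i ⟨k + 1, by omega⟩ := by
  rw [mul_apply]
  split_ifs with hk
  · simp [companionBlocks, hk]
  · rw [Finset.sum_eq_single ⟨k + 1, by omega⟩]
    · simp [companionBlocks, hk]
    · intro j _ hj
      have hj' : (j : ℕ) ≠ k + 1 := fun h => hj (Fin.ext h)
      simp [companionBlocks, hk, hj']
    · simp

theorem powerUnitriangular_mul_sub_companionBlocks (x : S) (P : Fin n → Matrix ι ι S) :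
    powerUnitriangular x * (x • 1 - companionBlocks P) = reducedCompanionBlocks x P := by
  ext1 i k
  rw [Matrix.mul_sub, Matrix.mul_smul, Matrix.mul_one, sub_apply, smul_apply,
    mul_companionBlocks_apply]
  by_cases hk : (k : ℕ) = n - 1
  · have hik : (i : ℕ) ≤ k := by omega
    simp only [dif_pos hk, reducedCompanionBlocks, hornerTail, powerUnitriangular, of_apply,
      if_pos hk, Fin.le_def, if_pos hik, smul_smul, ← pow_succ', ite_mul, zero_mul,
      smul_mul_assoc, Matrix.one_mul]
    congr 3
    omega
  · simp only [dif_neg hk, reducedCompanionBlocks, powerUnitriangular, of_apply, if_neg hk,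
      Fin.le_def]
    rcases lt_trichotomy (i : ℕ) (k + 1) with h | h | h
    · rw [if_pos (by omega : (i : ℕ) ≤ k), if_pos h.le, if_neg h.ne, smul_smul, ← pow_succ',
        show (k : ℕ) - i + 1 = k + 1 - i by omega, sub_self]
    · rw [if_neg (by omega), if_pos h.le, if_pos h, h, Nat.sub_self, pow_zero, one_smul,
        smul_zero, zero_sub]
    · rw [if_neg (by omega), if_neg (by omega), if_neg h.ne', smul_zero, sub_zero]

theorem det_comp_reducedCompanionBlocks (x : S) (P : Fin (n + 1) → Matrix ι ι S) :
    (comp _ _ ι ι S (reducedCompanionBlocks x P)).det = (hornerTail x P 0).det := by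
  set σ : Equiv.Perm (Fin (n + 1) × ι) := Equiv.prodCongrLeft fun _ => finRotate (n + 1)
  have hrot : (comp _ _ ι ι S (reducedCompanionBlocks x P)).submatrix σ id =
      comp _ _ ι ι S ((reducedCompanionBlocks x P).submatrix (finRotate (n + 1)) id) := rfl
  have htri :
      ((reducedCompanionBlocks x P).submatrix (finRotate (n + 1)) id).BlockTriangular id := by
    intro i k hki
    have hk : (k : ℕ) ≠ n := by have := i.is_le; simp at hki; omega
    simp only [submatrix_apply, id_eq, reducedCompanionBlocks, of_apply, add_tsub_cancel_right,
      if_neg hk, finRotate_apply, Fin.val_add_one]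
    split_ifs <;> simp_all; omega
  have hsign : (Equiv.Perm.sign σ : S) = (-1) ^ (n * Fintype.card ι) := by
    simp [σ, Equiv.Perm.sign_prodCongrLeft, sign_finRotate, pow_mul]
  have hdiag : ∏ i, ((reducedCompanionBlocks x P).submatrix (finRotate (n + 1)) id i i).det =
      (-1) ^ (n * Fintype.card ι) * (hornerTail x P 0).det := by
    have hlt (i : Fin n) : (i : ℕ) ≠ n := i.is_lt.ne
    simp only [Fin.prod_univ_castSucc, submatrix_apply, id_eq, reducedCompanionBlocks, of_apply]
    simp [hlt, det_neg, pow_mul]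
    ring
  have hperm := det_permute σ (comp _ _ ι ι S (reducedCompanionBlocks x P))
  rw [hrot, htri.det_comp, hdiag, hsign] at hperm
  exact ((isUnit_neg_one.pow _).mul_left_cancel hperm).symm

theorem det_comp_smul_one_sub_companionBlocks (x : S) (P : Fin n → Matrix ι ι S) :
    (comp _ _ ι ι S (x • 1 - companionBlocks P)).det =
      (x ^ n • 1 - ∑ ℓ : Fin n, x ^ (ℓ : ℕ) • P ℓ).det := by
  cases n with
  | zero => simp
  | succ n =>
    have hmul : comp _ _ ι ι S (powerUnitriangular x * (x • 1 - companionBlocks P)) =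
        comp _ _ ι ι S (powerUnitriangular x) * comp _ _ ι ι S (x • 1 - companionBlocks P) :=
      map_mul (compRingEquiv (Fin (n + 1)) ι S) _ _
    calc _ = (comp _ _ ι ι S (powerUnitriangular (n := n + 1) x)).det *
          (comp _ _ ι ι S (x • 1 - companionBlocks P)).det := by
          rw [det_comp_powerUnitriangular, one_mul]
      _ = (hornerTail x P 0).det := by
          rw [← det_mul, ← hmul, powerUnitriangular_mul_sub_companionBlocks,
            det_comp_reducedCompanionBlocks]
      _ = _ := by simp [hornerTail]

end Matrix

theorem comp_companionBlocks {F : Type*} [Field F] {m n : ℕ}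
    (C : Fin n → Matrix (Fin m) (Fin m) F) :
    comp _ _ _ _ F (companionBlocks C) = blockCompanion C := by
  ext ⟨i, a⟩ ⟨j, b⟩
  simp [companionBlocks, blockCompanion, apply_ite (fun M : Matrix (Fin m) (Fin m) F => M a b),
    one_apply]

theorem stmt_15_general {F : Type*} [Field F] (m n : ℕ)
    (C : Fin n → Matrix (Fin m) (Fin m) F) :
    (blockCompanion C).charpoly = Matrix.det
      ((X : F[X]) ^ n • (1 : Matrix (Fin m) (Fin m) F[X]) -
        ∑ ℓ : Fin n, (X : F[X]) ^ (ℓ : ℕ) • (C ℓ).map Polynomial.C) := by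
  rw [charpoly, ← comp_companionBlocks, charmatrix_comp, companionBlocks_map,
    det_comp_smul_one_sub_companionBlocks]

/-- The characteristic polynomial of the `(m,n)`-block companion matrix `T` equals
`det F(X)` where `F(X) = I_m X^n - C_{n-1} X^{n-1} - ⋯ - C_1 X - C_0`. -/
theorem stmt_15 {F : Type*} [Field F] [Fintype F] (m n : ℕ) (hm : 1 ≤ m) (hn : 1 ≤ n)
    (C : Fin n → Matrix (Fin m) (Fin m) F) :
    (blockCompanion C).charpoly = Matrix.det
      ((X : F[X]) ^ n • (1 : Matrix (Fin m) (Fin m) F[X]) -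
        ∑ ℓ : Fin n, (X : F[X]) ^ (ℓ : ℕ) • (C ℓ).map Polynomial.C) :=
  stmt_15_general m n C
end
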